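/- arXiv:2211.13876 — 2 statements merged into one kernel-verified Lean document; each statement's English description precedes it below -/
import Mathlib

section
/- Let θ be a real number, let k ≥ 1, and let m₁, …, m_k be positive integers with partial sums S₀ = 0 and S_j = m₁ + ⋯ + m_j. Assume the lattice points (S_j, ⌊S_j·θ⌋) for j = 0, …, k form a concave chain, i.e. the edge slopes are nonincreasing: m_{j+1}·(⌊S_j·θ⌋ − ⌊S_{j−1}·θ⌋) ≥ m_j·(⌊S_{j+1}·θ⌋ − ⌊S_j·θ⌋) for all 1 ≤ j ≤ k−1. Then ∑_{j=1}^{k} ⌊m_j·θ⌋ = ⌊(m₁ + ⋯ + m_k)·θ⌋. -/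
lemma aux_le_floor_nsmul (n : ℕ) (x : ℝ) : (n : ℤ) * ⌊x⌋ ≤ ⌊(n : ℝ) * x⌋ := by
  rw [Int.le_floor]
  push_cast
  exact mul_le_mul_of_nonneg_left (Int.floor_le x) (by positivity)

lemma aux_floor_nsmul_le (n : ℕ) (hn : 0 < n) (x : ℝ) :
    ⌊(n : ℝ) * x⌋ ≤ (n : ℤ) * ⌊x⌋ + n - 1 := by
  have h : ⌊(n : ℝ) * x⌋ < (n : ℤ) * ⌊x⌋ + n := by
    rw [Int.floor_lt]
    push_cast
    have hx : x < (⌊x⌋ : ℝ) + 1 := Int.lt_floor_add_one x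
    have : (n : ℝ) * x < (n : ℝ) * ((⌊x⌋ : ℝ) + 1) :=
      mul_lt_mul_of_pos_left hx (by exact_mod_cast hn)
    linarith
  omega

/-- If the lattice points `(S j, ⌊S j * θ⌋)` form a concave chain
(nonincreasing edge slopes), then the floors of the pieces sum to the floor of
the total: `∑ ⌊mⱼθ⌋ = ⌊(m₁ + ⋯ + m_k)θ⌋`. Here `m j` for `1 ≤ j ≤ k` are the
positive integers and `S j = m 1 + ⋯ + m j` (so `S 0 = 0`). -/
theorem floor_sum_eq_of_concave_chain
    (θ : ℝ) (k : ℕ) (hk : 1 ≤ k) (m S : ℕ → ℕ)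
    (hm : ∀ j, 1 ≤ j → j ≤ k → 0 < m j)
    (hS : ∀ j, S j = ∑ i ∈ Finset.Icc 1 j, m i)
    (hconcave : ∀ j, 1 ≤ j → j ≤ k - 1 →
      (m (j + 1) : ℤ) * (⌊(S j : ℝ) * θ⌋ - ⌊(S (j - 1) : ℝ) * θ⌋) ≥
      (m j : ℤ) * (⌊(S (j + 1) : ℝ) * θ⌋ - ⌊(S j : ℝ) * θ⌋)) :
    ∑ j ∈ Finset.Icc 1 k, ⌊(m j : ℝ) * θ⌋ =
      ⌊((∑ j ∈ Finset.Icc 1 k, m j : ℕ) : ℝ) * θ⌋ := by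
  have hS0 : S 0 = 0 := by simp [hS]
  have hSsucc : ∀ j, S (j + 1) = S j + m (j + 1) := by
    intro j
    rw [hS, hS, Finset.sum_Icc_succ_top (Nat.le_add_left 1 j)]
  -- key: each edge slope equals ⌊m_j θ⌋
  have key : ∀ j, 1 ≤ j → j ≤ k →
      ⌊(S j : ℝ) * θ⌋ = ⌊(S (j - 1) : ℝ) * θ⌋ + ⌊(m j : ℝ) * θ⌋ := by
    intro j hj
    induction j, hj using Nat.le_induction with
    | base =>
      intro _
      have h1 : S 1 = m 1 := by rw [hSsucc 0, hS0]; ring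
      simp [hS0, h1]
    | succ j hj ih =>
      intro hjk
      simp only [Nat.add_sub_cancel]
      have hjk' : j ≤ k := by omega
      have ihj := ih hjk'
      have hmj := hm j hj hjk'
      have hmj1 := hm (j + 1) (by omega) hjk
      have hsum : (S (j + 1) : ℝ) * θ = (S j : ℝ) * θ + (m (j + 1) : ℝ) * θ := by
        rw [hSsucc j]; push_cast; ring
      -- lower bound
      have hlow : ⌊(S j : ℝ) * θ⌋ + ⌊(m (j + 1) : ℝ) * θ⌋ ≤ ⌊(S (j + 1) : ℝ) * θ⌋ := by
        rw [Int.le_floor, hsum]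
        push_cast
        have := Int.floor_le ((S j : ℝ) * θ)
        have := Int.floor_le ((m (j + 1) : ℝ) * θ)
        linarith
      -- upper bound via concavity
      have hcon := hconcave j hj (by omega)
      rw [ihj] at hcon
      -- hcon : m(j+1) * ⌊m j θ⌋ ≥ m j * (⌊S(j+1)θ⌋ - ⌊S j θ⌋)
      have h1 : (m (j + 1) : ℤ) * ⌊(m j : ℝ) * θ⌋ ≤
          ⌊(m (j + 1) : ℝ) * ((m j : ℝ) * θ)⌋ :=
        aux_le_floor_nsmul (m (j + 1)) ((m j : ℝ) * θ)
      have h2 : ⌊(m j : ℝ) * ((m (j + 1) : ℝ) * θ)⌋ ≤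
          (m j : ℤ) * ⌊(m (j + 1) : ℝ) * θ⌋ + (m j : ℤ) - 1 :=
        aux_floor_nsmul_le (m j) hmj ((m (j + 1) : ℝ) * θ)
      have heq : (m (j + 1) : ℝ) * ((m j : ℝ) * θ) = (m j : ℝ) * ((m (j + 1) : ℝ) * θ) := by
        ring
      rw [heq] at h1
      have hup : ⌊(S (j + 1) : ℝ) * θ⌋ ≤ ⌊(S j : ℝ) * θ⌋ + ⌊(m (j + 1) : ℝ) * θ⌋ := by
        by_contra hcontra
        push_neg at hcontra
        have hd : ⌊(m (j + 1) : ℝ) * θ⌋ + 1 ≤ ⌊(S (j + 1) : ℝ) * θ⌋ - ⌊(S j : ℝ) * θ⌋ := by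
          omega
        have hmjZ : (0 : ℤ) < (m j : ℤ) := by exact_mod_cast hmj
        have : (m j : ℤ) * (⌊(m (j + 1) : ℝ) * θ⌋ + 1) ≤
            (m j : ℤ) * (⌊(S (j + 1) : ℝ) * θ⌋ - ⌊(S j : ℝ) * θ⌋) :=
          mul_le_mul_of_nonneg_left hd (le_of_lt hmjZ)
        nlinarith [hcon, h1, h2]
      omega
  -- telescoping
  have tele : ∀ j, j ≤ k →
      ⌊(S j : ℝ) * θ⌋ = ∑ i ∈ Finset.Icc 1 j, ⌊(m i : ℝ) * θ⌋ := by
    intro j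
    induction j with
    | zero => intro _; simp [hS0]
    | succ j ih =>
      intro hjk
      have := key (j + 1) (by omega) hjk
      simp only [Nat.add_sub_cancel] at this
      rw [this, ih (by omega), Finset.sum_Icc_succ_top (Nat.le_add_left 1 j)]
  have := tele k le_rfl
  rw [← hS k, this]
end

section
/- Let θ be a real number, let k ≥ 1, and let m₁, …, m_k be positive integers with partial sums S₀ = 0 and S_j = m₁ + ⋯ + m_j. Assume the lattice points (S_j, ⌈S_j·θ⌉) for j = 0, …, k form a convex chain, i.e. the edge slopes are nondecreasing: m_{j+1}·(⌈S_j·θ⌉ − ⌈S_{j−1}·θ⌉) ≤ m_j·(⌈S_{j+1}·θ⌉ − ⌈S_j·θ⌉) for all 1 ≤ j ≤ k−1. Then ∑_{j=1}^{k} ⌈m_j·θ⌉ = ⌈(m₁ + ⋯ + m_k)·θ⌉. -/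
private lemma tele_sum {M : Type*} [AddCommGroup M] (f : ℕ → M) (t : ℕ) :
    ∑ j ∈ Finset.Icc 1 t, (f j - f (j - 1)) = f t - f 0 := by
  induction t with
  | zero => simp
  | succ n ih =>
    rw [Finset.sum_Icc_succ_top (by omega), ih, Nat.add_sub_cancel]
    abel

private lemma aux_edge (θ : ℝ) (k : ℕ) (hk : 1 ≤ k) (m S : ℕ → ℕ) (c : ℕ → ℤ)
    (hm : ∀ j, 1 ≤ j → j ≤ k → 0 < m j)
    (hS : ∀ j, S j = ∑ i ∈ Finset.Icc 1 j, m i)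
    (hc : ∀ j, c j = ⌈(S j : ℝ) * θ⌉)
    (hconvex : ∀ j, 1 ≤ j → j ≤ k - 1 →
      (m (j + 1) : ℤ) * (c j - c (j - 1)) ≤ (m j : ℤ) * (c (j + 1) - c j))
    (t : ℕ) (h1 : 1 ≤ t) (h2 : t ≤ k) :
    c t - c (t - 1) = ⌈(m t : ℝ) * θ⌉ := by
  have hS0 : S 0 = 0 := by simp [hS]
  have hc0 : c 0 = 0 := by simp [hc, hS0]
  have hSsucc : ∀ n : ℕ, S (n + 1) = S n + m (n + 1) := by
    intro n; rw [hS, hS, Finset.sum_Icc_succ_top (by omega)]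
  -- upper bound
  have hcub : ∀ n : ℕ, c (n + 1) - c n ≤ ⌈(m (n + 1) : ℝ) * θ⌉ := by
    intro n
    rw [hc, hc]
    have h : (S (n + 1) : ℝ) * θ = (S n : ℝ) * θ + (m (n + 1) : ℝ) * θ := by
      rw [hSsucc]; push_cast; ring
    rw [h]
    have := Int.ceil_add_le ((S n : ℝ) * θ) ((m (n + 1) : ℝ) * θ)
    omega
  obtain ⟨n, rfl⟩ : ∃ n, t = n + 1 := ⟨t - 1, by omega⟩
  simp only [Nat.add_sub_cancel]
  by_contra hne
  have hlt : c (n + 1) - c n < ⌈(m (n + 1) : ℝ) * θ⌉ :=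
    lt_of_le_of_ne (hcub n) hne
  have hdlt : ((c (n + 1) - c n : ℤ) : ℝ) < (m (n + 1) : ℝ) * θ := by
    have h1' : (c (n + 1) - c n : ℤ) ≤ ⌈(m (n + 1) : ℝ) * θ⌉ - 1 := by omega
    have h2' : (⌈(m (n + 1) : ℝ) * θ⌉ : ℝ) < (m (n + 1) : ℝ) * θ + 1 :=
      Int.ceil_lt_add_one _
    have h3' : ((c (n + 1) - c n : ℤ) : ℝ) ≤ (⌈(m (n + 1) : ℝ) * θ⌉ : ℝ) - 1 := by
      exact_mod_cast h1'
    linarith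
  -- slope monotonicity
  have hmono : ∀ u : ℕ, u + 1 ≤ k → ∀ j : ℕ, j ≤ u →
      ((c (j + 1) - c j : ℤ) : ℝ) / (m (j + 1) : ℝ) ≤
      ((c (u + 1) - c u : ℤ) : ℝ) / (m (u + 1) : ℝ) := by
    intro u
    induction u with
    | zero => intro _ j hj; interval_cases j; exact le_refl _
    | succ p ih =>
      intro hu j hj
      have hmp1 : (0 : ℝ) < m (p + 1) := by exact_mod_cast hm (p + 1) (by omega) (by omega)
      have hmp2 : (0 : ℝ) < m (p + 2) := by exact_mod_cast hm (p + 2) (by omega) (by omega)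
      have hstep : ((c (p + 1) - c p : ℤ) : ℝ) / (m (p + 1) : ℝ) ≤
          ((c (p + 2) - c (p + 1) : ℤ) : ℝ) / (m (p + 2) : ℝ) := by
        have hcv := hconvex (p + 1) (by omega) (by omega)
        simp only [Nat.add_sub_cancel] at hcv
        have hcv' : ((m (p + 2) : ℝ)) * ((c (p + 1) - c p : ℤ) : ℝ) ≤
            ((m (p + 1) : ℝ)) * ((c (p + 2) - c (p + 1) : ℤ) : ℝ) := by
          exact_mod_cast hcv
        rw [div_le_div_iff₀ hmp1 hmp2]
        linarith
      rcases Nat.eq_or_lt_of_le hj with h | h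
      · rw [h]
      · exact le_trans (ih (by omega) j (by omega)) hstep
  -- slope at t is below θ
  have hmn1 : (0 : ℝ) < m (n + 1) := by exact_mod_cast hm (n + 1) (by omega) h2
  have hslope : ((c (n + 1) - c n : ℤ) : ℝ) / (m (n + 1) : ℝ) < θ := by
    rw [div_lt_iff₀ hmn1]
    linarith [mul_comm θ ((m (n + 1) : ℕ) : ℝ)]
  -- each earlier edge is strictly below the line
  have hterm : ∀ j ∈ Finset.Icc 1 (n + 1), ((c j - c (j - 1) : ℤ) : ℝ) < (m j : ℝ) * θ := by
    intro j hj
    simp only [Finset.mem_Icc] at hj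
    obtain ⟨i, rfl⟩ : ∃ i, j = i + 1 := ⟨j - 1, by omega⟩
    simp only [Nat.add_sub_cancel]
    have hmi : (0 : ℝ) < m (i + 1) := by exact_mod_cast hm (i + 1) (by omega) (by omega)
    have h1' : ((c (i + 1) - c i : ℤ) : ℝ) / (m (i + 1) : ℝ) < θ :=
      lt_of_le_of_lt (hmono n h2 i (by omega)) hslope
    have := (div_lt_iff₀ hmi).mp h1'
    linarith [mul_comm θ ((m (i + 1) : ℕ) : ℝ)]
  have hne' : (Finset.Icc 1 (n + 1)).Nonempty := Finset.nonempty_Icc.mpr (by omega)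
  have hlt2 : ∑ j ∈ Finset.Icc 1 (n + 1), ((c j - c (j - 1) : ℤ) : ℝ) <
      ∑ j ∈ Finset.Icc 1 (n + 1), (m j : ℝ) * θ :=
    Finset.sum_lt_sum_of_nonempty hne' hterm
  have hLHS : ∑ j ∈ Finset.Icc 1 (n + 1), ((c j - c (j - 1) : ℤ) : ℝ) = ((c (n + 1) : ℤ) : ℝ) := by
    have := tele_sum (fun j => ((c j : ℤ) : ℝ)) (n + 1)
    simp only [push_cast] at this ⊢
    push_cast at this ⊢
    rw [this, hc0]
    simp
  have hRHS : ∑ j ∈ Finset.Icc 1 (n + 1), (m j : ℝ) * θ = (S (n + 1) : ℝ) * θ := by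
    rw [← Finset.sum_mul, hS (n + 1)]
    push_cast
    ring
  rw [hLHS, hRHS] at hlt2
  have hge : (S (n + 1) : ℝ) * θ ≤ ((c (n + 1) : ℤ) : ℝ) := by
    rw [hc]
    exact Int.le_ceil _
  linarith

/-- If the lattice points `(S j, ⌈S j * θ⌉)` form a convex chain
(nondecreasing edge slopes), then the ceilings of the pieces sum to the ceiling
of the total: `∑ ⌈mⱼθ⌉ = ⌈(m₁ + ⋯ + m_k)θ⌉`. -/
theorem ceil_sum_eq_of_convex_chain
    (θ : ℝ) (k : ℕ) (hk : 1 ≤ k) (m S : ℕ → ℕ)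
    (hm : ∀ j, 1 ≤ j → j ≤ k → 0 < m j)
    (hS : ∀ j, S j = ∑ i ∈ Finset.Icc 1 j, m i)
    (hconvex : ∀ j, 1 ≤ j → j ≤ k - 1 →
      (m (j + 1) : ℤ) * (⌈(S j : ℝ) * θ⌉ - ⌈(S (j - 1) : ℝ) * θ⌉) ≤
      (m j : ℤ) * (⌈(S (j + 1) : ℝ) * θ⌉ - ⌈(S j : ℝ) * θ⌉)) :
    ∑ j ∈ Finset.Icc 1 k, ⌈(m j : ℝ) * θ⌉ =
      ⌈((∑ j ∈ Finset.Icc 1 k, m j : ℕ) : ℝ) * θ⌉ := by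
  have key : ∀ t, 1 ≤ t → t ≤ k →
      ⌈(S t : ℝ) * θ⌉ - ⌈(S (t - 1) : ℝ) * θ⌉ = ⌈(m t : ℝ) * θ⌉ :=
    fun t h1 h2 =>
      aux_edge θ k hk m S (fun j => ⌈(S j : ℝ) * θ⌉) hm hS (fun _ => rfl) hconvex t h1 h2
  calc ∑ j ∈ Finset.Icc 1 k, ⌈(m j : ℝ) * θ⌉
      = ∑ j ∈ Finset.Icc 1 k, (⌈(S j : ℝ) * θ⌉ - ⌈(S (j - 1) : ℝ) * θ⌉) :=
        Finset.sum_congr rfl (fun j hj => by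
          simp only [Finset.mem_Icc] at hj
          exact (key j hj.1 hj.2).symm)
    _ = ⌈(S k : ℝ) * θ⌉ - ⌈(S 0 : ℝ) * θ⌉ := tele_sum (fun j => ⌈(S j : ℝ) * θ⌉) k
    _ = ⌈((∑ j ∈ Finset.Icc 1 k, m j : ℕ) : ℝ) * θ⌉ := by
        rw [← hS k]
        simp [hS]
end
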